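/- arXiv:1706.07664 — 4 statements merged into one kernel-verified Lean document; each statement's English description precedes it below -/
import Mathlib

section
/- Let ψ be a nonnegative nondecreasing function with Radon–Nikodym derivative structure a(z) = dM(z)/dψ(z) for a vector-valued function M, and define A(u) = ∫_u^∞ a(z) a(z)ᵀ σ²(z) F(dz), assumed nonsingular for each u. Define the transformation (Tf)(u) = f(u) − ∫_{-∞}^u a(z)ᵀ A(z)^{-1} (∫_z^∞ a(v) f(dv)) ψ(dz). Then T applied to the function u ↦ cᵀ M(u) yields the zero function, for any constant vector c. -/
open MeasureTheory Matrix

/-- with `M(u) = ∫_{-∞}^u a(z) σ²(z) F(dz)` (so that `a = dM/dψ` with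
`ψ(dz) = σ²(z) F(dz)`) and `A(u) = ∫_u^∞ a(z) a(z)ᵀ σ²(z) F(dz)` nonsingular, the
martingale transformation `(Tf)(u) = f(u) − ∫_{-∞}^u a(z)ᵀ A(z)⁻¹ (∫_z^∞ a(v) f(dv)) ψ(dz)`
annihilates the function `u ↦ cᵀ M(u)` for any constant vector `c`
(its Stieltjes measure being `cᵀ a(v) σ²(v) F(dv)`). -/
theorem stmt3 (m : ℕ) (F : Measure ℝ) [IsProbabilityMeasure F]
    (σ2 : ℝ → ℝ) (hσmeas : Measurable σ2) (hσpos : ∀ z, 0 ≤ σ2 z)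
    (a : ℝ → Fin m → ℝ) (hameas : ∀ j, Measurable fun z => a z j)
    (hint : ∀ i j, Integrable (fun z => σ2 z * a z i * a z j) F)
    (hint1 : ∀ j, Integrable (fun z => σ2 z * a z j) F)
    (A : ℝ → Matrix (Fin m) (Fin m) ℝ)
    (hA : ∀ u i j, A u i j = ∫ z in Set.Ici u, σ2 z * a z i * a z j ∂F)
    (hAinv : ∀ u, IsUnit (A u).det)
    (M : ℝ → Fin m → ℝ)
    (hM : ∀ u j, M u j = ∫ z in Set.Iic u, σ2 z * a z j ∂F)
    (c : Fin m → ℝ) (u : ℝ) :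
    (∑ k, c k * M u k) -
      ∫ z in Set.Iic u,
        (∑ i, a z i * ∑ j, (A z)⁻¹ i j *
          (∫ v in Set.Ici z, a v j * (∑ k, c k * (σ2 v * a v k)) ∂F)) * σ2 z ∂F = 0 := by
  -- Step 1: the inner integral equals `∑ k, c k * A z j k`.
  have hinner : ∀ z j,
      (∫ v in Set.Ici z, a v j * (∑ k, c k * (σ2 v * a v k)) ∂F)
        = ∑ k, c k * A z j k := by
    intro z j
    have : (fun v => a v j * (∑ k, c k * (σ2 v * a v k)))
        = fun v => ∑ k, c k * (σ2 v * a v j * a v k) := by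
      funext v; rw [Finset.mul_sum]; congr 1; funext k; ring
    rw [this, integral_finset_sum]
    · refine Finset.sum_congr rfl fun k _ => ?_
      rw [integral_const_mul, hA]
    · intro k _
      exact ((hint j k).restrict).const_mul (c k)
  -- Step 2: simplify the summand using `A⁻¹ * A = 1`.
  have hsum : ∀ z, (∑ i, a z i * ∑ j, (A z)⁻¹ i j *
      (∫ v in Set.Ici z, a v j * (∑ k, c k * (σ2 v * a v k)) ∂F))
        = ∑ i, a z i * c i := by
    intro z
    refine Finset.sum_congr rfl fun i _ => ?_
    congr 1
    have hAA : (A z)⁻¹ * A z = 1 := nonsing_inv_mul _ (hAinv z)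
    calc (∑ j, (A z)⁻¹ i j * (∫ v in Set.Ici z, a v j * (∑ k, c k * (σ2 v * a v k)) ∂F))
        = ∑ j, (A z)⁻¹ i j * ∑ k, c k * A z j k := by
          refine Finset.sum_congr rfl fun j _ => ?_; rw [hinner]
      _ = ∑ k, c k * ∑ j, (A z)⁻¹ i j * A z j k := by
          simp only [Finset.mul_sum]
          rw [Finset.sum_comm]
          refine Finset.sum_congr rfl fun k _ => Finset.sum_congr rfl fun j _ => by ring
      _ = ∑ k, c k * (1 : Matrix (Fin m) (Fin m) ℝ) i k := by
          refine Finset.sum_congr rfl fun k _ => ?_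
          congr 1
          have := congrArg (fun B => B i k) hAA
          simpa [Matrix.mul_apply] using this
      _ = c i := by simp [Matrix.one_apply]
  have heq : (∫ z in Set.Iic u,
        (∑ i, a z i * ∑ j, (A z)⁻¹ i j *
          (∫ v in Set.Ici z, a v j * (∑ k, c k * (σ2 v * a v k)) ∂F)) * σ2 z ∂F)
      = ∑ k, c k * M u k := by
    have h1 : (∫ z in Set.Iic u,
          (∑ i, a z i * ∑ j, (A z)⁻¹ i j *
            (∫ v in Set.Ici z, a v j * (∑ k, c k * (σ2 v * a v k)) ∂F)) * σ2 z ∂F)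
        = ∫ z in Set.Iic u, ∑ k, c k * (σ2 z * a z k) ∂F := by
      refine setIntegral_congr_fun measurableSet_Iic fun z _ => ?_
      rw [hsum z, Finset.sum_mul]
      exact Finset.sum_congr rfl fun k _ => by ring
    rw [h1, integral_finset_sum]
    · refine Finset.sum_congr rfl fun k _ => ?_
      rw [integral_const_mul, hM]
    · intro k _
      exact ((hint1 k).restrict).const_mul (c k)
  rw [heq, sub_self]
end

section
/- Let λ₁ ≥ λ₂ ≥ … ≥ λ_p ≥ 0 with λ_q > 0 and λ_{q+1} = … = λ_p = 0 for some 1 ≤ q < p, and let λ̂₁,…,λ̂_p be estimates with max_i |λ̂ᵢ − λᵢ| = O_p(n^{-1/2}). Define q̂ = argmin_{1≤i≤p} (λ̂²_{i+1} + c_n)/(λ̂²_i + c_n) with λ̂_{p+1} = 0 and c_n = log n / n. Then P(q̂ = q) → 1 as n → ∞ (with p, q, and the λᵢ fixed). -/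
/-!
On the event that every estimate lies within `M n^{-1/2}` of the truth, all squared errors are
at most `c_n = log n / n` once `log n ≥ M²`. Then `λ̂₁, …, λ̂_q` stay of order `λ_q` while
`λ̂²_{q+1}, …, λ̂²_p ≤ c_n`, so the ratio at `q` is `O(c_n)`, the ratios before `q` are bounded
below by a constant and the ratios after `q` are at least `1/2`. As `c_n → 0`, `q` is the strict
minimizer on this event, whose probability is eventually at least `1 - ε`.
-/

open MeasureTheory Filter Topology

section GapRatio

variable {p : ℕ} {c b B : ℝ} {x : Fin (p + 1) → ℝ} {i : Fin p}

/-- Indices are 0-based: `gapRatio c x i` is the paper's `(x²_{i+2} + c) / (x²_{i+1} + c)`. -/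
noncomputable def gapRatio (c : ℝ) (x : Fin (p + 1) → ℝ) (i : Fin p) : ℝ :=
  (x i.succ ^ 2 + c) / (x i.castSucc ^ 2 + c)

lemma gapRatio_le (hc : 0 < c) (hb : 0 < b) (hnum : x i.succ ^ 2 ≤ c)
    (hden : b ≤ x i.castSucc ^ 2) : gapRatio c x i ≤ 2 * c / b :=
  div_le_div₀ (by positivity) (by linarith) hb (by linarith)

lemma div_le_gapRatio (hc : 0 < c) (hnum : b ≤ x i.succ ^ 2)
    (hden : x i.castSucc ^ 2 ≤ B) : b / (B + c) ≤ gapRatio c x i :=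
  div_le_div₀ (by positivity) (by linarith) (by positivity) (by linarith)

lemma half_le_gapRatio (hc : 0 < c) (hden : x i.castSucc ^ 2 ≤ c) : 1 / 2 ≤ gapRatio c x i := by
  rw [gapRatio, le_div_iff₀ (by positivity)]
  nlinarith [sq_nonneg (x i.succ)]

theorem gapRatio_lt_gapRatio {lam : Fin (p + 1) → ℝ} {k : Fin p} (hmono : Antitone lam)
    (hpos : 0 < lam k.castSucc) (hnull : ∀ j, k.castSucc < j → lam j = 0) (hc : 0 < c)
    (hc_signal : 16 * c < lam k.castSucc ^ 2)
    (hc_spread : 32 * c * (4 * lam 0 ^ 2 + c) < lam k.castSucc ^ 4)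
    (hx : ∀ j, (x j - lam j) ^ 2 ≤ c) (hi : i ≠ k) :
    gapRatio c x k < gapRatio c x i := by
  set a := lam k.castSucc
  have hsignal : ∀ j ≤ k.castSucc, a ^ 2 / 4 ≤ x j ^ 2 ∧ x j ^ 2 ≤ 4 * lam 0 ^ 2 := by
    intro j hj
    have hlo : a ≤ lam j := hmono hj
    have hhi : lam j ≤ lam 0 := hmono (Fin.zero_le j)
    have herr : |x j - lam j| < a / 4 :=
      abs_lt_of_sq_lt_sq (by linarith [hx j]) (by positivity)
    rw [abs_lt] at herr
    constructor <;> nlinarith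
  have hnoise : ∀ j, k.castSucc < j → x j ^ 2 ≤ c := fun j hj => by
    simpa [hnull j hj] using hx j
  have hk : gapRatio c x k ≤ 2 * c / (a ^ 2 / 4) :=
    gapRatio_le hc (by positivity) (hnoise _ Fin.castSucc_lt_succ) (hsignal _ le_rfl).1
  rcases lt_or_gt_of_ne hi with hlt | hgt
  · calc gapRatio c x k ≤ 2 * c / (a ^ 2 / 4) := hk
      _ < a ^ 2 / 4 / (4 * lam 0 ^ 2 + c) := by
        rw [div_lt_div_iff₀ (by positivity) (by positivity)]
        linarith
      _ ≤ gapRatio c x i :=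
        div_le_gapRatio hc (hsignal _ (Fin.succ_le_castSucc_iff.2 hlt)).1
          (hsignal _ (Fin.castSucc_le_castSucc_iff.2 hlt.le)).2
  · calc gapRatio c x k ≤ 2 * c / (a ^ 2 / 4) := hk
      _ < 1 / 2 := by
        rw [div_lt_div_iff₀ (by positivity) (by positivity)]
        linarith
      _ ≤ gapRatio c x i := half_le_gapRatio hc (hnoise _ (Fin.castSucc_lt_castSucc_iff.2 hgt))

end GapRatio

theorem tendsto_measure_nhds_one_of_toReal_compl_le {Ω ι : Type*} [MeasurableSpace Ω]
    {μ : Measure Ω} [IsProbabilityMeasure μ] {l : Filter ι} {S : ι → Set Ω}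
    (h : ∀ ε : ℝ, 0 < ε → ∀ᶠ n in l, (μ (S n)ᶜ).toReal ≤ ε) :
    Tendsto (fun n => μ (S n)) l (𝓝 1) := by
  have hcompl : Tendsto (fun n => μ (S n)ᶜ) l (𝓝 0) := by
    refine ENNReal.tendsto_nhds_zero.2 fun ε hε => ?_
    rcases eq_or_ne ε ⊤ with rfl | hε_top
    · exact Eventually.of_forall fun _ => le_top
    filter_upwards [h ε.toReal (ENNReal.toReal_pos hε.ne' hε_top)] with n hn
    exact (ENNReal.toReal_le_toReal (measure_ne_top _ _) hε_top).1 hn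
  have hlower : ∀ n, 1 - μ (S n)ᶜ ≤ μ (S n) := fun n =>
    tsub_le_iff_right.2 (measure_univ (μ := μ) ▸ measure_univ_le_add_compl (S n))
  refine tendsto_of_tendsto_of_tendsto_of_le_of_le ?_ tendsto_const_nhds hlower
    fun _ => prob_le_one
  simpa using ENNReal.Tendsto.sub tendsto_const_nhds hcompl (Or.inl ENNReal.one_ne_top)

theorem tendsto_log_div_natCast_nhds_zero :
    Tendsto (fun n : ℕ => Real.log n / n) atTop (𝓝 0) :=
  Real.isLittleO_log_id_atTop.tendsto_div_nhds_zero.comp tendsto_natCast_atTop_atTop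

theorem eventually_sq_mul_rpow_neg_half_le_log_div (M : ℝ) :
    ∀ᶠ n : ℕ in atTop, (M * (n : ℝ) ^ (-(1 / 2 : ℝ))) ^ 2 ≤ Real.log n / n := by
  filter_upwards [(Real.tendsto_log_atTop.comp tendsto_natCast_atTop_atTop).eventually_ge_atTop
    (M ^ 2), eventually_gt_atTop 0] with n hlog hn
  have hn' : (0 : ℝ) < n := Nat.cast_pos.2 hn
  have hsq : ((n : ℝ) ^ (-(1 / 2 : ℝ))) ^ 2 = (n : ℝ)⁻¹ := by
    rw [← Real.rpow_natCast, ← Real.rpow_mul hn'.le]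
    norm_num [Real.rpow_neg_one]
  rw [mul_pow, hsq, ← div_eq_mul_inv]
  exact div_le_div_of_nonneg_right hlog hn'.le

/-- eigenvalue-ratio consistency of the MRER estimator. If the true eigenvalues
satisfy `λ₁ ≥ … ≥ λ_q > 0 = λ_{q+1} = … = λ_{p+1}` (0-based index `i` stores `λ_{i+1}`),
the estimates satisfy `max_i |λ̂ᵢ − λᵢ| = O_p(n^{-1/2})`, `λ̂_{p+1} = 0`, and
`c_n = log n / n`, then with probability tending to one the index `q` is the (unique, strict)
minimizer of `i ↦ (λ̂²_{i+1} + c_n)/(λ̂²_i + c_n)`, i.e. `P(q̂ = q) → 1`. -/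
theorem stmt10 {Ω : Type*} [MeasurableSpace Ω] (μ : Measure Ω) [IsProbabilityMeasure μ]
    (p q : ℕ) (hqp : q < p)
    (lam : Fin (p + 1) → ℝ)
    (hmono : ∀ i j : Fin (p + 1), i ≤ j → lam j ≤ lam i)
    (hqpos : 0 < lam ⟨q - 1, by omega⟩)
    (hzero : ∀ i : Fin (p + 1), q ≤ (i : ℕ) → lam i = 0)
    (lamHat : ℕ → Ω → Fin (p + 1) → ℝ)
    (hrate : ∀ ε : ℝ, 0 < ε → ∃ M : ℝ, ∀ n : ℕ, 1 ≤ n →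
      (μ {ω | ∃ i, M * (n:ℝ) ^ (-(1/2 : ℝ)) < |lamHat n ω i - lam i|}).toReal ≤ ε) :
    Tendsto
      (fun n : ℕ =>
        μ {ω | ∀ i : Fin p, i ≠ (⟨q - 1, by omega⟩ : Fin p) →
          ((lamHat n ω (Fin.succ (⟨q - 1, by omega⟩ : Fin p))) ^ 2 + Real.log n / n) /
              ((lamHat n ω (Fin.castSucc (⟨q - 1, by omega⟩ : Fin p))) ^ 2 + Real.log n / n)
            <
          ((lamHat n ω (Fin.succ i)) ^ 2 + Real.log n / n) /
              ((lamHat n ω (Fin.castSucc i)) ^ 2 + Real.log n / n)})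
      atTop (nhds 1) := by
  set k : Fin p := ⟨q - 1, by omega⟩
  have hpos : 0 < lam k.castSucc := hqpos
  have hnull : ∀ j, k.castSucc < j → lam j = 0 := fun j hj =>
    hzero j (by simp only [k, Fin.lt_def, Fin.val_castSucc] at hj; omega)
  have hc := tendsto_log_div_natCast_nhds_zero
  have hc_signal : ∀ᶠ n : ℕ in atTop, 16 * (Real.log n / n) < lam k.castSucc ^ 2 :=
    (hc.const_mul 16).eventually (gt_mem_nhds (by simpa using pow_pos hpos 2))
  have hc_spread : ∀ᶠ n : ℕ in atTop,
      32 * (Real.log n / n) * (4 * lam 0 ^ 2 + Real.log n / n) < lam k.castSucc ^ 4 := by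
    refine ((hc.const_mul 32).mul (hc.const_add _)).eventually (gt_mem_nhds ?_)
    simpa using pow_pos hpos 4
  refine tendsto_measure_nhds_one_of_toReal_compl_le (S := fun n : ℕ => {ω | ∀ i, i ≠ k →
    gapRatio (Real.log n / n) (lamHat n ω) k < gapRatio (Real.log n / n) (lamHat n ω) i})
    fun ε hε => ?_
  obtain ⟨M, hM⟩ := hrate ε hε
  filter_upwards [eventually_gt_atTop 1, hc_signal, hc_spread,
    eventually_sq_mul_rpow_neg_half_le_log_div M] with n hn hsignal hspread hnoise
  refine (ENNReal.toReal_mono (measure_ne_top _ _) (measure_mono fun ω hω => ?_)).trans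
    (hM n hn.le)
  simp only [Set.mem_compl_iff, Set.mem_ofPred_eq] at hω ⊢
  by_contra! hgood
  refine hω fun i hi => gapRatio_lt_gapRatio hmono hpos hnull
    (div_pos (Real.log_pos (by exact_mod_cast hn)) (by positivity)) hsignal hspread
    (fun j => ?_) hi
  exact (sq_abs _).symm.trans_le ((pow_le_pow_left₀ (abs_nonneg _) (hgood j) 2).trans hnoise)
end

section
/- Suppose X follows a spherically symmetric distribution on ℝᵖ and Γ is a p×p orthogonal matrix whose first row is β₀ᵀ/‖β₀‖. Then for any integrable function h : ℝ → ℝ and any u, E[h(β₀ᵀX) X 1{β₀ᵀX/‖β₀‖ ≤ u}] = (β₀/‖β₀‖²) E[h(β₀ᵀX) β₀ᵀX 1{β₀ᵀX/‖β₀‖ ≤ u}]. -/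
open MeasureTheory
open scoped RealInnerProductSpace

/-!
Let `R` be the orthogonal reflection fixing the line `ℝ ∙ β₀`. It preserves `⟪β₀, x⟫`, and it
preserves the law of a spherically symmetric `X`, so the vector `∫ g ⟪β₀, X⟫ • X` is fixed by `R`.
The fixed points of `R` are exactly the line `ℝ ∙ β₀`, and the coefficient along `β₀` of a vector on
that line is read off from its inner product with `β₀`.
-/

section

variable {E : Type*} [NormedAddCommGroup E] [InnerProductSpace ℝ E]

theorem eq_inner_div_smul_of_reflection_span_singleton_eq_self {β y : E}
    (hy : (ℝ ∙ β).reflection y = y) : y = (⟪β, y⟫ / ‖β‖ ^ 2) • β := by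
  have hmem : y ∈ ℝ ∙ β := (Submodule.reflection_eq_self_iff y).mp hy
  simpa using ((Submodule.starProjection_eq_self_iff.mpr hmem).symm.trans
    (Submodule.starProjection_singleton ℝ y))

theorem inner_reflection_span_singleton (β x : E) : ⟪β, (ℝ ∙ β).reflection x⟫ = ⟪β, x⟫ := by
  simpa only [Submodule.reflection_mem_subspace_eq_self
    (Submodule.mem_span_singleton_self (R := ℝ) β)] using ((ℝ ∙ β).reflection).inner_map_map β x

variable [MeasurableSpace E] [BorelSpace E] [SecondCountableTopology E]
  {Ω : Type*} [MeasurableSpace Ω] {μ : Measure Ω} {X : Ω → E} {β : E} {g : ℝ → ℝ}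

theorem reflection_integral_comp_inner_smul (hX : Measurable X)
    (hR : μ.map (fun ω => (ℝ ∙ β).reflection (X ω)) = μ.map X) (hg : Measurable g) :
    (ℝ ∙ β).reflection (∫ ω, g ⟪β, X ω⟫ • X ω ∂μ) = ∫ ω, g ⟪β, X ω⟫ • X ω ∂μ := by
  set R := (ℝ ∙ β).reflection
  set F : E → E := fun x => g ⟪β, x⟫ • x
  have hF : StronglyMeasurable F :=
    (hg.comp (continuous_const.inner continuous_id).measurable).stronglyMeasurable.smul
      stronglyMeasurable_id
  have hFR : ∀ x, F (R x) = R (F x) := fun x => by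
    simp only [F, R, inner_reflection_span_singleton, LinearIsometryEquiv.map_smul]
  calc R (∫ ω, F (X ω) ∂μ) = ∫ ω, F (R (X ω)) ∂μ := by
        simp_rw [hFR]; exact (R.toContinuousLinearEquiv.integral_comp_comm _).symm
    _ = ∫ y, F y ∂μ.map (fun ω => R (X ω)) :=
        (integral_map (R.continuous.measurable.comp hX).aemeasurable
          hF.aestronglyMeasurable).symm
    _ = ∫ ω, F (X ω) ∂μ := by
        rw [hR, integral_map hX.aemeasurable hF.aestronglyMeasurable]

theorem integral_comp_inner_smul_of_map_reflection [CompleteSpace E] (hX : Measurable X)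
    (hR : μ.map (fun ω => (ℝ ∙ β).reflection (X ω)) = μ.map X) (hg : Measurable g)
    (hint : Integrable (fun ω => g ⟪β, X ω⟫ • X ω) μ) :
    ∫ ω, g ⟪β, X ω⟫ • X ω ∂μ = ((∫ ω, g ⟪β, X ω⟫ * ⟪β, X ω⟫ ∂μ) / ‖β‖ ^ 2) • β := by
  refine (eq_inner_div_smul_of_reflection_span_singleton_eq_self
    (reflection_integral_comp_inner_smul hX hR hg)).trans ?_
  simp only [← integral_inner hint, real_inner_smul_right]

end

theorem stmt11_general {Ω : Type*} [MeasurableSpace Ω] (μ : Measure Ω)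
    (p : ℕ) (X : Ω → EuclideanSpace ℝ (Fin p)) (hX : Measurable X)
    (hsph : ∀ R : EuclideanSpace ℝ (Fin p) ≃ₗᵢ[ℝ] EuclideanSpace ℝ (Fin p),
      Measure.map (fun ω => R (X ω)) μ = Measure.map X μ)
    (β₀ : EuclideanSpace ℝ (Fin p))
    (h : ℝ → ℝ) (hh : Measurable h) (u : ℝ)
    (hint1 : Integrable (fun ω =>
      (h ⟪β₀, X ω⟫ * (if ⟪β₀, X ω⟫ / ‖β₀‖ ≤ u then (1:ℝ) else 0)) • X ω) μ) :
    ∫ ω, (h ⟪β₀, X ω⟫ * (if ⟪β₀, X ω⟫ / ‖β₀‖ ≤ u then (1:ℝ) else 0)) • X ω ∂μ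
      = ((∫ ω, h ⟪β₀, X ω⟫ * ⟪β₀, X ω⟫ *
            (if ⟪β₀, X ω⟫ / ‖β₀‖ ≤ u then (1:ℝ) else 0) ∂μ) / ‖β₀‖ ^ 2) • β₀ := by
  have hg : Measurable fun t : ℝ => h t * if t / ‖β₀‖ ≤ u then (1:ℝ) else 0 :=
    hh.mul (Measurable.ite (measurableSet_le (measurable_id.div_const _) measurable_const)
      measurable_const measurable_const)
  rw [integral_comp_inner_smul_of_map_reflection hX (hsph _) hg hint1]
  simp only [mul_right_comm]

/-- if `X` is spherically symmetric on `ℝᵖ`, then for any integrable `h` and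
any `u`, `E[h(β₀ᵀX) X 1{β₀ᵀX/‖β₀‖ ≤ u}] = (β₀/‖β₀‖²) E[h(β₀ᵀX) β₀ᵀX 1{β₀ᵀX/‖β₀‖ ≤ u}]`. -/
theorem stmt11 {Ω : Type*} [MeasurableSpace Ω] (μ : Measure Ω) [IsProbabilityMeasure μ]
    (p : ℕ) (X : Ω → EuclideanSpace ℝ (Fin p)) (hX : Measurable X)
    (hsph : ∀ R : EuclideanSpace ℝ (Fin p) ≃ₗᵢ[ℝ] EuclideanSpace ℝ (Fin p),
      Measure.map (fun ω => R (X ω)) μ = Measure.map X μ)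
    (β₀ : EuclideanSpace ℝ (Fin p)) (hβ : β₀ ≠ 0)
    (h : ℝ → ℝ) (hh : Measurable h) (u : ℝ)
    (hint1 : Integrable (fun ω =>
      (h ⟪β₀, X ω⟫ * (if ⟪β₀, X ω⟫ / ‖β₀‖ ≤ u then (1:ℝ) else 0)) • X ω) μ)
    (hint2 : Integrable (fun ω =>
      h ⟪β₀, X ω⟫ * ⟪β₀, X ω⟫ * (if ⟪β₀, X ω⟫ / ‖β₀‖ ≤ u then (1:ℝ) else 0)) μ) :
    ∫ ω, (h ⟪β₀, X ω⟫ * (if ⟪β₀, X ω⟫ / ‖β₀‖ ≤ u then (1:ℝ) else 0)) • X ω ∂μ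
      = ((∫ ω, h ⟪β₀, X ω⟫ * ⟪β₀, X ω⟫ *
            (if ⟪β₀, X ω⟫ / ‖β₀‖ ≤ u then (1:ℝ) else 0) ∂μ) / ‖β₀‖ ^ 2) • β₀ :=
  stmt11_general μ p X hX hsph β₀ h hh u hint1
end

section
/- Let M = ∫ α_t α_tᵀ dF_Y(t) where α_t = E[X 1{Y ≤ t}] ∈ ℝᵖ, under the model Y = G(BᵀX) + ε with E(ε|X) = 0 and X standardized with identity covariance satisfying the linearity condition. Then every column space vector of M lies in the central subspace: span(M) ⊆ S_{Y|X} = span(B). -/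
open MeasureTheory ProbabilityTheory Matrix

/-- under the linearity condition `E[X | BᵀX] = P_B X` and conditional
independence of `Y` and `X` given `BᵀX`, the CSE target matrix
`M = ∫ α_t α_tᵀ dF_Y(t)` with `α_t = E[X 1{Y ≤ t}]` satisfies `span(M) ⊆ span(B)`. -/
theorem stmt12 {Ω : Type*} [m0 : MeasurableSpace Ω] (μ : Measure Ω) [IsProbabilityMeasure μ]
    (p q : ℕ) (X : Ω → (Fin p → ℝ)) (Y : Ω → ℝ)
    (hX : Measurable X) (hY : Measurable Y)
    (B : Matrix (Fin p) (Fin q) ℝ)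
    (PB : Matrix (Fin p) (Fin p) ℝ)
    (hPB : PB = B * (Bᵀ * B)⁻¹ * Bᵀ)
    (hint : ∀ j, Integrable (fun ω => X ω j) μ)
    -- linearity condition: E[X | BᵀX] = P_B X
    (hlin : ∀ j, μ[(fun ω => X ω j) |
        MeasurableSpace.comap (fun ω => Bᵀ.mulVec (X ω)) inferInstance]
      =ᵐ[μ] fun ω => PB.mulVec (X ω) j)
    -- conditional independence of Y and X given BᵀX (in the form it is used)
    (hCI : ∀ (t : ℝ) (j : Fin p),
      μ[(fun ω => (if Y ω ≤ t then (1:ℝ) else 0) * X ω j) |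
          MeasurableSpace.comap (fun ω => Bᵀ.mulVec (X ω)) inferInstance]
        =ᵐ[μ] fun ω =>
          ((μ[(fun ω' => if Y ω' ≤ t then (1:ℝ) else 0) |
              MeasurableSpace.comap (fun ω' => Bᵀ.mulVec (X ω')) inferInstance]) ω) *
          ((μ[(fun ω' => X ω' j) |
              MeasurableSpace.comap (fun ω' => Bᵀ.mulVec (X ω')) inferInstance]) ω))
    (α : ℝ → Fin p → ℝ)
    (hα : ∀ t j, α t j = ∫ ω, (if Y ω ≤ t then (1:ℝ) else 0) * X ω j ∂μ)
    (M : Matrix (Fin p) (Fin p) ℝ)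
    (hM : ∀ j k, M j k = ∫ t, α t j * α t k ∂(Measure.map Y μ)) :
    LinearMap.range M.mulVecLin ≤ LinearMap.range B.mulVecLin := by
  classical
  have hmeasBX : Measurable[m0] (fun ω => Bᵀ.mulVec (X ω)) :=
    (LinearMap.continuous_of_finiteDimensional (Bᵀ.mulVecLin)).measurable.comp hX
  have hm : MeasurableSpace.comap (fun ω => Bᵀ.mulVec (X ω)) inferInstance ≤ m0 := hmeasBX.comap_le
  haveI : SigmaFinite (μ.trim hm) := inferInstance
  set I : ℝ → Ω → ℝ := fun t ω => if Y ω ≤ t then (1:ℝ) else 0 with hIdef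
  have hImeas : ∀ t, Measurable[m0] (I t) := fun t =>
    Measurable.ite (m := m0) (hY measurableSet_Iic) measurable_const measurable_const
  have hIbd : ∀ t ω, ‖I t ω‖ ≤ 1 := by
    intro t ω; simp only [hIdef]; split <;> simp
  have hIint : ∀ t, Integrable (I t) μ := fun t => by
    have : I t = Set.indicator {ω | Y ω ≤ t} (fun _ => (1:ℝ)) := by
      funext ω; simp [hIdef, Set.indicator_apply, Set.mem_setOf_eq]
    rw [this]
    exact (integrable_const (1:ℝ)).indicator (μ := μ) (hY measurableSet_Iic)
  have hItX : ∀ t j, Integrable (fun ω => I t ω * X ω j) μ := fun t j =>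
    (hint j).bdd_mul (hImeas t).aestronglyMeasurable (Filter.Eventually.of_forall (hIbd t))
  -- the conditional expectation of the indicator
  set c : ℝ → Ω → ℝ := fun t => μ[I t | MeasurableSpace.comap (fun ω => Bᵀ.mulVec (X ω)) inferInstance] with hcdef
  have hcbd : ∀ t, ∀ᵐ ω ∂μ, ‖c t ω‖ ≤ 1 := fun t => by
    have := ae_bdd_condExp_of_ae_bdd (m := MeasurableSpace.comap (fun ω => Bᵀ.mulVec (X ω)) inferInstance) (μ := μ) (R := 1) (f := I t)
      (Filter.Eventually.of_forall (fun ω => by simpa [Real.norm_eq_abs] using hIbd t ω))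
    simpa [Real.norm_eq_abs, hcdef] using this
  have hcX_int : ∀ t i, Integrable (fun ω => c t ω * X ω i) μ := fun t i =>
    (hint i).bdd_mul (stronglyMeasurable_condExp.mono hm).aestronglyMeasurable (hcbd t)
  -- α t j = ∫ c * E[X j | MeasurableSpace.comap (fun ω => Bᵀ.mulVec (X ω)) inferInstance]
  have hkeyA : ∀ t j, α t j = ∫ ω, c t ω * (μ[(fun ω' => X ω' j) | MeasurableSpace.comap (fun ω => Bᵀ.mulVec (X ω)) inferInstance]) ω ∂μ := by
    intro t j
    rw [hα t j, ← integral_condExp (μ := μ) (f := fun ω => I t ω * X ω j) hm]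
    exact integral_congr_ae (hCI t j)
  -- ∫ c * X i = α t i
  have hcX : ∀ t i, ∫ ω, c t ω * X ω i ∂μ = α t i := by
    intro t i
    rw [hkeyA t i, ← integral_condExp (μ := μ) (f := fun ω => c t ω * X ω i) hm]
    refine integral_congr_ae ?_
    exact condExp_mul_of_stronglyMeasurable_left stronglyMeasurable_condExp (hcX_int t i) (hint i)
  -- α t = PB.mulVec (α t)
  have hkey : ∀ t, α t = PB.mulVec (α t) := by
    intro t
    funext j
    have h1 : α t j = ∫ ω, c t ω * PB.mulVec (X ω) j ∂μ := by
      rw [hkeyA t j]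
      exact integral_congr_ae ((Filter.EventuallyEq.refl _ (c t)).mul (hlin j))
    have h2 : ∀ ω, c t ω * PB.mulVec (X ω) j
        = ∑ i, PB j i * (c t ω * X ω i) := by
      intro ω
      simp only [Matrix.mulVec, dotProduct, Finset.mul_sum]
      exact Finset.sum_congr rfl fun i _ => by ring
    rw [h1]
    calc ∫ ω, c t ω * PB.mulVec (X ω) j ∂μ
        = ∫ ω, ∑ i, PB j i * (c t ω * X ω i) ∂μ := by
          exact integral_congr_ae (Filter.Eventually.of_forall h2)
      _ = ∑ i, ∫ ω, PB j i * (c t ω * X ω i) ∂μ := by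
          refine integral_finset_sum _ fun i _ => ?_
          exact (hcX_int t i).const_mul _
      _ = ∑ i, PB j i * ∫ ω, c t ω * X ω i ∂μ := by
          exact Finset.sum_congr rfl fun i _ => integral_const_mul _ _
      _ = ∑ i, PB j i * α t i := by
          exact Finset.sum_congr rfl fun i _ => by rw [hcX]
      _ = PB.mulVec (α t) j := by
          simp [Matrix.mulVec, dotProduct]
  -- measurability and boundedness of t ↦ α t j
  have hαmeas : ∀ j, Measurable (fun t => α t j) := by
    intro j
    have hpos : Integrable (fun ω => max (X ω j) 0) μ := (hint j).pos_part
    have hneg : Integrable (fun ω => max (-(X ω j)) 0) μ := (hint j).neg_part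
    have hdecomp : (fun t => α t j)
        = fun t => (∫ ω, I t ω * max (X ω j) 0 ∂μ) - ∫ ω, I t ω * max (-(X ω j)) 0 ∂μ := by
      funext t
      rw [hα t j]
      have : ∀ ω, (if Y ω ≤ t then (1:ℝ) else 0) * X ω j
          = I t ω * max (X ω j) 0 - I t ω * max (-(X ω j)) 0 := by
        intro ω
        simp only [hIdef]
        rcases le_total (X ω j) 0 with h | h
        · rw [max_eq_right h, max_eq_left (by linarith)]; ring
        · rw [max_eq_left h, max_eq_right (by linarith)]; ring
      rw [integral_congr_ae (Filter.Eventually.of_forall this)]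
      exact integral_sub
        (hpos.bdd_mul (hImeas t).aestronglyMeasurable (Filter.Eventually.of_forall (hIbd t)))
        (hneg.bdd_mul (hImeas t).aestronglyMeasurable (Filter.Eventually.of_forall (hIbd t)))
    have hmono : ∀ (g : Ω → ℝ), Integrable g μ → (∀ ω, 0 ≤ g ω) →
        Monotone (fun t => ∫ ω, I t ω * g ω ∂μ) := by
      intro g hg hg0 s t hst
      refine integral_mono
        (hg.bdd_mul (hImeas s).aestronglyMeasurable (Filter.Eventually.of_forall (hIbd s)))
        (hg.bdd_mul (hImeas t).aestronglyMeasurable (Filter.Eventually.of_forall (hIbd t)))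
        fun ω => ?_
      simp only [hIdef]
      by_cases h : Y ω ≤ s
      · rw [if_pos h, if_pos (h.trans hst)]
      · rw [if_neg h]
        have : (0:ℝ) ≤ (if Y ω ≤ t then (1:ℝ) else 0) := by positivity
        nlinarith [hg0 ω]
    rw [hdecomp]
    exact ((hmono _ hpos fun ω => le_max_right _ _).measurable).sub
      ((hmono _ hneg fun ω => le_max_right _ _).measurable)
  have hαbd : ∀ t j, |α t j| ≤ ∫ ω, |X ω j| ∂μ := by
    intro t j
    rw [hα t j]
    calc |∫ ω, (if Y ω ≤ t then (1:ℝ) else 0) * X ω j ∂μ|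
        ≤ ∫ ω, |(if Y ω ≤ t then (1:ℝ) else 0) * X ω j| ∂μ := by
          simpa [Real.norm_eq_abs] using norm_integral_le_integral_norm (μ := μ) (fun ω => (if Y ω ≤ t then (1:ℝ) else 0) * X ω j)
      _ ≤ ∫ ω, |X ω j| ∂μ := by
          refine integral_mono (hItX t j).abs (hint j).abs fun ω => ?_
          rw [abs_mul]
          have h1 : |if Y ω ≤ t then (1:ℝ) else 0| ≤ 1 := by split <;> simp
          nlinarith [abs_nonneg (X ω j)]
  -- integrability of t ↦ α t i * α t k w.r.t. map Y μ
  haveI : IsProbabilityMeasure (Measure.map Y μ) := Measure.isProbabilityMeasure_map hY.aemeasurable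
  have hαint : ∀ i k, Integrable (fun t => α t i * α t k) (Measure.map Y μ) := by
    intro i k
    refine Integrable.mono'
      (integrable_const ((∫ ω, |X ω i| ∂μ) * (∫ ω, |X ω k| ∂μ)))
      ((hαmeas i).mul (hαmeas k)).aestronglyMeasurable
      (Filter.Eventually.of_forall fun t => ?_)
    rw [Real.norm_eq_abs, abs_mul]
    have h1 := hαbd t i
    have h2 := hαbd t k
    have h3 : (0:ℝ) ≤ |α t i| := abs_nonneg _
    have h4 : (0:ℝ) ≤ |α t k| := abs_nonneg _
    nlinarith
  -- M = PB * M
  have hMP : PB * M = M := by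
    ext j k
    rw [Matrix.mul_apply, hM j k]
    calc ∑ i, PB j i * M i k
        = ∑ i, ∫ t, PB j i * (α t i * α t k) ∂(Measure.map Y μ) := by
          exact Finset.sum_congr rfl fun i _ => by rw [hM, integral_const_mul]
      _ = ∫ t, ∑ i, PB j i * (α t i * α t k) ∂(Measure.map Y μ) := by
          exact (integral_finset_sum _ fun i _ => (hαint i k).const_mul _).symm
      _ = ∫ t, α t j * α t k ∂(Measure.map Y μ) := by
          refine integral_congr_ae (Filter.Eventually.of_forall fun t => ?_)
          show ∑ i, PB j i * (α t i * α t k) = α t j * α t k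
          have : ∑ i, PB j i * (α t i * α t k) = PB.mulVec (α t) j * α t k := by
            simp only [Matrix.mulVec, dotProduct, Finset.sum_mul]
            exact Finset.sum_congr rfl fun i _ => by ring
          rw [this, ← hkey t]
  -- conclude
  rintro _ ⟨v, rfl⟩
  refine ⟨((Bᵀ * B)⁻¹ * Bᵀ).mulVec (M.mulVec v), ?_⟩
  simp only [Matrix.mulVecLin_apply]
  rw [Matrix.mulVec_mulVec, ← Matrix.mul_assoc, ← hPB]
  rw [show PB.mulVec (M.mulVec v) = (PB * M).mulVec v from Matrix.mulVec_mulVec _ _ _, hMP]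
end
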